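/- arXiv:1507.04814 — 4 statements merged into one kernel-verified Lean document; each statement's English description precedes it below -/
import Mathlib

section
/- Degenerate addition formula: for elements x, y, λ of a commutative ring and n ≥ 0, [x+y]_{n,λ} = ∑_{k=0}^n C(n,k) ∑_{l=0}^k [x]_{n−k,λ} λ^{k−l} S₁(k,l) y^l, where [z]_{n,λ} = z(z−λ)···(z−(n−1)λ). -/
open Finset Polynomial

/-- Signed Stirling numbers of the first kind: coefficients of the falling factorial. -/
noncomputable def S1 (n l : ℕ) : ℤ := (descPochhammer ℤ n).coeff l

/-- Stirling numbers of the second kind (explicit formula). -/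
noncomputable def S2 (n m : ℕ) : ℚ :=
  ((m.factorial : ℚ))⁻¹ * ∑ j ∈ range (m + 1), (-1 : ℚ) ^ (m - j) * (m.choose j) * (j : ℚ) ^ n

lemma S1_succ_coeff (k l : ℕ) : S1 (k+1) (l+1) = S1 k l - (k : ℤ) * S1 k (l+1) := by
  simp only [S1, descPochhammer_succ_right]
  rw [show ((k : ℤ[X])) = C (k : ℤ) by simp, coeff_mul_X_sub_C]
  ring

lemma S1_succ_zero (k : ℕ) : S1 (k+1) 0 = -(k : ℤ) * S1 k 0 := by
  simp only [S1, descPochhammer_succ_right]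
  rw [show ((k : ℤ[X])) = C (k : ℤ) by simp, mul_coeff_zero]
  simp [mul_comm]

lemma S1_top (k : ℕ) : S1 k (k+1) = 0 := by
  apply Polynomial.coeff_eq_zero_of_natDegree_lt
  rw [descPochhammer_natDegree]; omega

lemma lemA {R : Type*} [CommRing R] (y lam : R) (k : ℕ) :
    ∏ j ∈ range k, (y - (j : R) * lam) =
      ∑ l ∈ range (k + 1), lam ^ (k - l) * (S1 k l : R) * y ^ l := by
  induction k with
  | zero => simp [S1]
  | succ k ih =>
    rw [prod_range_succ, ih]
    rw [sum_range_succ' (fun l => lam ^ (k+1-l) * (S1 (k+1) l : R) * y ^ l)]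
    have h0 : lam ^ (k+1-0) * (S1 (k+1) 0 : R) * y ^ 0
        = -((k:R) * (lam ^ (k+1) * (S1 k 0 : R) * y ^ 0)) := by
      rw [S1_succ_zero]; push_cast; ring
    rw [h0]
    have h1 : ∀ l ∈ range (k+1), lam ^ (k+1-(l+1)) * (S1 (k+1) (l+1) : R) * y ^ (l+1)
        = lam ^ (k-l) * (S1 k l : R) * y ^ l * y
          - (k:R) * (lam ^ (k - (l+1) + 1) * (S1 k (l+1) : R) * y ^ (l+1)) := by
      intro l hl
      rw [S1_succ_coeff]
      rw [show k + 1 - (l+1) = k - l by omega]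
      simp only [mem_range] at hl
      rcases Nat.lt_or_ge l k with h | h
      · rw [show k - (l+1) + 1 = k - l by omega]; push_cast; ring
      · have hlk : l = k := by omega
        subst hlk
        rw [S1_top]; push_cast; ring
    rw [sum_congr rfl h1, sum_sub_distrib]
    have h2 : ∑ l ∈ range (k+1), (k:R) * (lam ^ (k - (l+1) + 1) * (S1 k (l+1) : R) * y ^ (l+1))
        + (k:R) * (lam ^ (k+1) * (S1 k 0 : R) * y ^ 0)
        = (k:R) * lam * ∑ l ∈ range (k+1), lam ^ (k-l) * (S1 k l : R) * y ^ l := by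
      rw [mul_sum, sum_range_succ' (fun l => (k:R) * lam * (lam ^ (k-l) * (S1 k l : R) * y ^ l))]
      rw [sum_range_succ (fun l => (k:R) * (lam ^ (k - (l+1) + 1) * (S1 k (l+1) : R) * y ^ (l+1)))]
      have hz : (k:R) * (lam ^ (k - (k+1) + 1) * (S1 k (k+1) : R) * y ^ (k+1)) = 0 := by
        rw [S1_top]; push_cast; ring
      rw [hz, add_zero]
      congr 1
      · apply sum_congr rfl
        intro l hl
        simp only [mem_range] at hl
        rw [show k - (l+1) + 1 = k - l by omega,
            show k - l = (k - (l+1)) + 1 by omega]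
        ring
      · rw [show k - 0 = k from rfl]; ring
    have h3 : ∑ l ∈ range (k+1), lam ^ (k-l) * (S1 k l : R) * y ^ l * y
        = (∑ l ∈ range (k+1), lam ^ (k-l) * (S1 k l : R) * y ^ l) * y := by
      rw [sum_mul]
    linear_combination h2 - h3

lemma vander {R : Type*} [CommRing R] (x y lam : R) (n : ℕ) :
    ∏ j ∈ range n, (x + y - (j : R) * lam) =
      ∑ k ∈ range (n + 1), (n.choose k : R) *
        (∏ j ∈ range (n - k), (x - (j : R) * lam)) * (∏ j ∈ range k, (y - (j : R) * lam)) := by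
  induction n with
  | zero => simp
  | succ n ih =>
    rw [prod_range_succ, ih, sum_mul]
    have key : ∀ k ∈ range (n+1),
        (n.choose k : R) * (∏ j ∈ range (n-k), (x - (j : R) * lam))
          * (∏ j ∈ range k, (y - (j : R) * lam)) * (x + y - (n:R)*lam)
        = (n.choose k : R) * (∏ j ∈ range (n+1-k), (x - (j : R) * lam))
            * (∏ j ∈ range k, (y - (j : R) * lam))
          + (n.choose k : R) * (∏ j ∈ range (n-k), (x - (j : R) * lam))
            * (∏ j ∈ range (k+1), (y - (j : R) * lam)) := by
      intro k hk
      simp only [mem_range] at hk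
      rw [show n + 1 - k = (n - k) + 1 by omega, prod_range_succ, prod_range_succ]
      have hc : ((n - k : ℕ) : R) = (n : R) - (k : R) := by
        rw [Nat.cast_sub (by omega : k ≤ n)]
      rw [hc]; ring
    rw [sum_congr rfl key, sum_add_distrib]
    rw [sum_range_succ' (fun k => ((n+1).choose k : R) *
        (∏ j ∈ range (n+1-k), (x - (j : R) * lam)) * (∏ j ∈ range k, (y - (j : R) * lam)))]
    have pasc : ∀ k ∈ range (n+1),
        ((n+1).choose (k+1) : R) * (∏ j ∈ range (n+1-(k+1)), (x - (j : R) * lam))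
          * (∏ j ∈ range (k+1), (y - (j : R) * lam))
        = (n.choose k : R) * (∏ j ∈ range (n-k), (x - (j : R) * lam))
            * (∏ j ∈ range (k+1), (y - (j : R) * lam))
          + (n.choose (k+1) : R) * (∏ j ∈ range (n-k), (x - (j : R) * lam))
            * (∏ j ∈ range (k+1), (y - (j : R) * lam)) := by
      intro k hk
      rw [Nat.choose_succ_succ, show n + 1 - (k+1) = n - k by omega]
      push_cast; ring
    rw [sum_congr rfl pasc, sum_add_distrib]
    have e2 : ∑ k ∈ range (n+1), (n.choose (k+1) : R)
          * (∏ j ∈ range (n-k), (x - (j : R) * lam)) * (∏ j ∈ range (k+1), (y - (j : R) * lam))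
        + ((n+1).choose 0 : R) * (∏ j ∈ range (n+1-0), (x - (j : R) * lam))
          * (∏ j ∈ range 0, (y - (j : R) * lam))
        = ∑ k ∈ range (n+1), (n.choose k : R)
          * (∏ j ∈ range (n+1-k), (x - (j : R) * lam)) * (∏ j ∈ range k, (y - (j : R) * lam)) := by
      rw [sum_range_succ' (fun k => (n.choose k : R) *
          (∏ j ∈ range (n+1-k), (x - (j : R) * lam)) * (∏ j ∈ range k, (y - (j : R) * lam)))]
      rw [sum_range_succ (fun k => (n.choose (k+1) : R) *
          (∏ j ∈ range (n-k), (x - (j : R) * lam)) * (∏ j ∈ range (k+1), (y - (j : R) * lam)))]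
      rw [Nat.choose_succ_self]
      push_cast
      rw [zero_mul, zero_mul, add_zero]
      congr 1
      all_goals simp [Nat.succ_sub_succ_eq_sub]
    linear_combination -e2

/-- degenerate addition formula. -/
theorem degenerate_addition_formula
    {R : Type*} [CommRing R] (x y lam : R) (n : ℕ) :
    ∏ j ∈ range n, (x + y - (j : R) * lam) =
      ∑ k ∈ range (n + 1), (n.choose k : R) *
        ∑ l ∈ range (k + 1),
          (∏ j ∈ range (n - k), (x - (j : R) * lam)) * lam ^ (k - l) * (S1 k l : R) * y ^ l := by
  rw [vander]
  apply sum_congr rfl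
  intro k hk
  rw [lemA y lam k, Finset.mul_sum, Finset.mul_sum]
  apply sum_congr rfl
  intro l hl
  ring
end

section
/- Distribution (multiplication) formula for Carlitz q-Bernoulli polynomials defined by the explicit sum: for q in a field of characteristic 0 with all needed q-numbers nonzero, l ≥ 0 and m ≥ 1, β_{l,q}(x) = [m]_q^{l−1} ∑_{i=0}^{m−1} q^i β_{l,q^m}((x+i)/m), where β_{l,q}(x) = (1/(1−q)^l) ∑_{j=0}^l C(l,j)(−1)^j q^{jx} (j+1)/[j+1]_q and q^{(x+i)/m} is interpreted as a formal element whose m-th power is q^{x+i}. -/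
open Finset Polynomial

/-- The q-number `[k]_q = (1-q^k)/(1-q)`. -/
noncomputable def qnum (q : ℝ) (k : ℕ) : ℝ := (1 - q ^ k) / (1 - q)

/-- The Carlitz q-Bernoulli polynomial, via the explicit sum formula;
`q ^ ((j:ℝ)*x)` is the real power `q^{jx}`. -/
noncomputable def carl (q : ℝ) (l : ℕ) (x : ℝ) : ℝ :=
  (1 / (1 - q) ^ l) * ∑ j ∈ range (l + 1),
    (l.choose j : ℝ) * (-1) ^ j * q ^ ((j : ℝ) * x) * (((j : ℝ) + 1) / qnum q (j + 1))

/-! In `∑ᵢ qⁱ β_{l,q^m}((x+i)/m)` the `j`-th term carries `qⁱ (q^m)^{j(x+i)/m} = q^{jx} (q^{j+1})ⁱ`,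
so summing over `i` first produces the geometric sum `[m]_{q^{j+1}}`. Both `[j+1]_q [m]_{q^{j+1}}`
and `[m]_q [j+1]_{q^m}` equal `[m(j+1)]_q`, which turns `[m]_{q^{j+1}} / [j+1]_{q^m}` into
`[m]_q / [j+1]_q`; the leftover constant is `[m]_q^l / (1-q^m)^l = 1 / (1-q)^l`. -/

theorem qnum_mul_qnum_pow (q : ℝ) (a b : ℕ) : qnum q a * qnum (q ^ a) b = qnum q (a * b) := by
  unfold qnum
  -- when `q ^ a = 1` both sides are junk `0`s of division by zero
  by_cases ha : 1 - q ^ a = 0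
  · have hab : q ^ (a * b) = 1 := by rw [pow_mul, ← (sub_eq_zero.mp ha), one_pow]
    simp [ha, hab]
  · rw [pow_mul, div_mul_div_comm, mul_comm (1 - q ^ a), mul_div_mul_right _ _ ha]

theorem qnum_eq_geom_sum {q : ℝ} (hq : q ≠ 1) (k : ℕ) : qnum q k = ∑ i ∈ range k, q ^ i := by
  rw [geom_sum_eq hq, qnum, ← neg_div_neg_eq, neg_sub, neg_sub]

theorem one_sub_pow_ne_zero {q : ℝ} (hq0 : 0 ≤ q) (hq1 : q ≠ 1) {k : ℕ} (hk : k ≠ 0) :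
    1 - q ^ k ≠ 0 :=
  sub_ne_zero.mpr fun h => hq1 ((pow_eq_one_iff_of_nonneg hq0 hk).mp h.symm)

theorem qnum_ne_zero {q : ℝ} (hq0 : 0 ≤ q) (hq1 : q ≠ 1) {k : ℕ} (hk : k ≠ 0) : qnum q k ≠ 0 :=
  div_ne_zero (one_sub_pow_ne_zero hq0 hq1 hk) (sub_ne_zero.mpr (Ne.symm hq1))

theorem qnum_pow_div_qnum_pow {q : ℝ} (hq0 : 0 ≤ q) (hq1 : q ≠ 1) {a b : ℕ} (ha : a ≠ 0)
    (hb : b ≠ 0) : qnum (q ^ b) a / qnum (q ^ a) b = qnum q a / qnum q b := by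
  have hqa : q ^ a ≠ 1 := fun h => hq1 ((pow_eq_one_iff_of_nonneg hq0 ha).mp h)
  rw [div_eq_div_iff (qnum_ne_zero (pow_nonneg hq0 a) hqa hb) (qnum_ne_zero hq0 hq1 hb),
    mul_comm, qnum_mul_qnum_pow, qnum_mul_qnum_pow, mul_comm]

theorem rpow_pow_mul_add_div {q : ℝ} (hq : 0 < q) (x : ℝ) (j i : ℕ) {m : ℕ} (hm : m ≠ 0) :
    (q ^ m) ^ ((j : ℝ) * ((x + i) / m)) = q ^ ((j : ℝ) * x) * (q ^ i) ^ j := by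
  have hexp : (m : ℝ) * ((j : ℝ) * ((x + i) / m)) = (j : ℝ) * x + ((i * j : ℕ) : ℝ) := by
    push_cast
    field_simp
  rw [← Real.rpow_natCast q m, ← Real.rpow_mul hq.le, hexp, Real.rpow_add hq, Real.rpow_natCast,
    pow_mul]

theorem sum_pow_mul_rpow_pow_add_div {q : ℝ} (hq0 : 0 < q) (hq1 : q ≠ 1) (x : ℝ) (j : ℕ) {m : ℕ}
    (hm : m ≠ 0) :
    ∑ i ∈ range m, q ^ i * (q ^ m) ^ ((j : ℝ) * ((x + i) / m)) =
      q ^ ((j : ℝ) * x) * qnum (q ^ (j + 1)) m := by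
  have hqj : q ^ (j + 1) ≠ 1 := fun h => hq1 ((pow_eq_one_iff_of_nonneg hq0.le j.succ_ne_zero).mp h)
  rw [qnum_eq_geom_sum hqj, mul_sum]
  refine sum_congr rfl fun i _ => ?_
  rw [rpow_pow_mul_add_div hq0 x j i hm, ← pow_mul, ← pow_mul, pow_mul']
  ring

theorem sum_pow_mul_carl_pow {q : ℝ} (hq0 : 0 < q) (hq1 : q ≠ 1) (l : ℕ) (x : ℝ) {m : ℕ}
    (hm : m ≠ 0) :
    ∑ i ∈ range m, q ^ i * carl (q ^ m) l ((x + i) / m) =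
      qnum q m / (1 - q ^ m) ^ l * ∑ j ∈ range (l + 1),
        (l.choose j : ℝ) * (-1) ^ j * q ^ ((j : ℝ) * x) * (((j : ℝ) + 1) / qnum q (j + 1)) := by
  unfold carl
  simp_rw [mul_sum]
  rw [sum_comm]
  refine sum_congr rfl fun j _ => ?_
  set c : ℝ := (l.choose j : ℝ) * (-1) ^ j * ((j : ℝ) + 1) / (1 - q ^ m) ^ l
  calc ∑ i ∈ range m, q ^ i * (1 / (1 - q ^ m) ^ l * ((l.choose j : ℝ) * (-1) ^ j *
          (q ^ m) ^ ((j : ℝ) * ((x + i) / m)) * (((j : ℝ) + 1) / qnum (q ^ m) (j + 1))))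
      = c / qnum (q ^ m) (j + 1) * ∑ i ∈ range m, q ^ i * (q ^ m) ^ ((j : ℝ) * ((x + i) / m)) := by
        rw [mul_sum]
        refine sum_congr rfl fun i _ => ?_
        ring
    _ = c * q ^ ((j : ℝ) * x) * (qnum (q ^ (j + 1)) m / qnum (q ^ m) (j + 1)) := by
        rw [sum_pow_mul_rpow_pow_add_div hq0 hq1 x j hm]
        ring
    _ = _ := by
        rw [qnum_pow_div_qnum_pow hq0.le hq1 hm j.succ_ne_zero]
        ring

/-- distribution formula for Carlitz q-Bernoulli polynomials. -/
theorem carlitz_distribution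
    (q x : ℝ) (hq0 : 0 < q) (hq1 : q ≠ 1) (l m : ℕ) (hm : 1 ≤ m) :
    carl q l x = qnum q m ^ ((l : ℤ) - 1) *
      ∑ i ∈ range m, q ^ (i : ℕ) * carl (q ^ m) l ((x + i) / m) := by
  have hm0 : m ≠ 0 := Nat.one_le_iff_ne_zero.mp hm
  have hcoef : qnum q m ^ ((l : ℤ) - 1) * (qnum q m / (1 - q ^ m) ^ l) = 1 / (1 - q) ^ l := by
    have := one_sub_pow_ne_zero hq0.le hq1 hm0
    rw [zpow_sub_one₀ (qnum_ne_zero hq0.le hq1 hm0), zpow_natCast, qnum, div_pow]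
    field_simp
  rw [sum_pow_mul_carl_pow hq0 hq1 l x hm0, ← mul_assoc, hcoef, carl]
end

section
/- Difference equation for Carlitz q-Bernoulli polynomials: for q in a field of characteristic 0 with suitable nonvanishing, and n ≥ 1, q·β_{n,q}(x+1) − β_{n,q}(x) = (q−1)[x]_q^n + n q^x [x]_q^{n−1}, where β_{n,q}(x) = (1/(1−q)^n) ∑_{j=0}^n C(n,j)(−1)^j q^{jx} (j+1)/[j+1]_q and [x]_q = (1−q^x)/(1−q). -/
open Finset Polynomial

lemma poly1 {K : Type*} [CommRing K] (X : K) (n : ℕ) :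
    ∑ j ∈ range (n + 1), (n.choose j : K) * (-1) ^ j * X ^ j = (1 - X) ^ n := by
  rw [show (1 - X) = -X + 1 by ring, add_pow]
  refine Finset.sum_congr rfl fun j _ => ?_
  rw [neg_pow]
  ring

lemma poly2 {K : Type*} [CommRing K] (X : K) (m : ℕ) :
    ∑ j ∈ range (m + 2), (((m+1).choose j : K)) * (-1) ^ j * (j : K) * X ^ j
      = -((m : K) + 1) * X * (1 - X) ^ m := by
  rw [Finset.sum_range_succ']
  simp only [Nat.cast_zero, mul_zero, zero_mul, add_zero]
  push_cast
  have h : ∀ i : ℕ, (((m+1).choose (i+1) : K)) * ((i : K) + 1) = ((m : K) + 1) * (m.choose i : K) := by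
    intro i
    have := Nat.add_one_mul_choose_eq m i
    have : ((m+1) * m.choose i : ℕ) = ((m+1).choose (i+1) * (i+1) : ℕ) := by
      simpa [Nat.succ_eq_add_one] using this
    have := congrArg (Nat.cast : ℕ → K) this
    push_cast at this
    exact this.symm
  have := poly1 X m
  calc ∑ i ∈ range (m + 1), (((m+1).choose (i+1) : K)) * (-1) ^ (i+1) * ((i : K) + 1) * X ^ (i+1)
      = ∑ i ∈ range (m + 1), (-((m : K) + 1) * X) * ((m.choose i : K) * (-1) ^ i * X ^ i) := by
        refine Finset.sum_congr rfl fun i _ => ?_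
        have h2 := h i
        calc (((m+1).choose (i+1) : K)) * (-1) ^ (i+1) * ((i : K) + 1) * X ^ (i+1)
            = ((((m+1).choose (i+1) : K)) * ((i : K) + 1)) * ((-1) ^ (i+1) * X ^ (i+1)) := by ring
          _ = (((m : K) + 1) * (m.choose i : K)) * ((-1) ^ (i+1) * X ^ (i+1)) := by rw [h2]
          _ = (-((m : K) + 1) * X) * ((m.choose i : K) * (-1) ^ i * X ^ i) := by ring
    _ = (-((m : K) + 1) * X) * ((1 - X) ^ m) := by rw [← Finset.mul_sum, this]
    _ = -((m : K) + 1) * X * (1 - X) ^ m := by ring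

/-- difference equation for Carlitz q-Bernoulli polynomials.
`X` plays the role of `q^x` (so `q^{jx} = X^j`, `q^{x+1} ↦ qX`, `[x]_q = (1-X)/(1-q)`). -/
theorem carlitz_difference_equation
    {K : Type*} [Field K] [CharZero K] (q X : K) (hq : q ≠ 1) (n : ℕ) (hn : 1 ≤ n)
    (hqj : ∀ j ≤ n, q ^ (j + 1) ≠ 1) (B : K → K)
    (hB : ∀ Y, B Y = (1 / (1 - q) ^ n) *
        ∑ j ∈ range (n + 1), (n.choose j : K) * (-1) ^ j * Y ^ j *
          (((j : K) + 1) / ((1 - q ^ (j + 1)) / (1 - q)))) :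
    q * B (q * X) - B X =
      (q - 1) * ((1 - X) / (1 - q)) ^ n + (n : K) * X * ((1 - X) / (1 - q)) ^ (n - 1) := by
  obtain ⟨m, rfl⟩ := Nat.exists_eq_add_of_le hn
  set N := 1 + m with hN
  have hq' : (1 : K) - q ≠ 0 := sub_ne_zero.mpr (Ne.symm hq)
  have key : q * B (q * X) - B X
      = (1 / (1 - q) ^ N) * (-(1 - q) *
        ∑ j ∈ range (N + 1), (N.choose j : K) * (-1) ^ j * ((j : K) + 1) * X ^ j) := by
    rw [hB, hB, ← mul_assoc, mul_comm q (1 / (1 - q) ^ N), mul_assoc, ← mul_sub,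
      Finset.mul_sum, ← Finset.sum_sub_distrib]
    refine congrArg _ ?_
    rw [Finset.mul_sum]
    refine Finset.sum_congr rfl fun j hj => ?_
    have hj' : j ≤ N := Nat.lt_succ_iff.mp (Finset.mem_range.mp hj)
    have h1 : (1 : K) - q ^ (j + 1) ≠ 0 := sub_ne_zero.mpr (Ne.symm (hqj j hj'))
    field_simp
    ring
  rw [key]
  have hsum : ∑ j ∈ range (N + 1), (N.choose j : K) * (-1) ^ j * ((j : K) + 1) * X ^ j
      = (1 - X) ^ N - (N : K) * X * (1 - X) ^ m := by
    have e1 : ∀ j : K, ∀ a : K, a * (j + 1) = a * j + a := fun j a => by ring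
    have split : ∑ j ∈ range (N + 1), (N.choose j : K) * (-1) ^ j * ((j : K) + 1) * X ^ j
        = (∑ j ∈ range (N + 1), (N.choose j : K) * (-1) ^ j * (j : K) * X ^ j)
          + ∑ j ∈ range (N + 1), (N.choose j : K) * (-1) ^ j * X ^ j := by
      rw [← Finset.sum_add_distrib]
      exact Finset.sum_congr rfl fun j _ => by ring
    have hN2 : N + 1 = m + 2 := by omega
    have hNm : (N : K) = (m : K) + 1 := by rw [hN]; push_cast; ring
    rw [split, poly1, hN2]
    have := poly2 X m
    have hch : ∀ j, (N.choose j : K) = ((m+1).choose j : K) := fun j => by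
      rw [hN, Nat.add_comm 1 m]
    calc (∑ j ∈ range (m + 2), (N.choose j : K) * (-1) ^ j * (j : K) * X ^ j) + (1 - X) ^ N
        = (∑ j ∈ range (m + 2), ((m+1).choose j : K) * (-1) ^ j * (j : K) * X ^ j) + (1 - X) ^ N := by
          rw [Finset.sum_congr rfl fun j _ => by rw [hch j]]
      _ = -((m : K) + 1) * X * (1 - X) ^ m + (1 - X) ^ N := by rw [this]
      _ = (1 - X) ^ N - (N : K) * X * (1 - X) ^ m := by rw [hNm]; ring
  rw [hsum]
  have hNpow : (1 - q) ^ N = (1 - q) ^ m * (1 - q) := by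
    rw [hN, pow_add, pow_one]; ring
  have hNm1 : N - 1 = m := by omega
  rw [hNm1, div_pow, div_pow]
  have hpm : ((1 : K) - q) ^ m ≠ 0 := pow_ne_zero _ hq'
  have hpN : ((1 : K) - q) ^ N ≠ 0 := pow_ne_zero _ hq'
  field_simp
  rw [hNpow]
  ring
end

section
/- Degenerate difference equation: with β_{n,q}(x|λ) = ∑_{l=0}^n S₁(n,l) λ^{n−l} β_{l,q}(x), and assuming the difference equation q β_{l,q}(x+1) − β_{l,q}(x) = (q−1)[x]_q^l + l q^x [x]_q^{l−1} for all l ≥ 1 and q β_{0,q}(x+1) − β_{0,q}(x) = q−1, one has for n ≥ 1: q β_{n,q}(x+1|λ) − β_{n,q}(x|λ) = (q−1) λ^n ([x]_q/λ)_n + ∑_{l=1}^n S₁(n,l) λ^{n−l} l [x]_q^{l−1} q^x, where (y)_n = y(y−1)···(y−n+1) and λ^n ([x]_q/λ)_n = ∑_{l=0}^n S₁(n,l) λ^{n−l} [x]_q^l. -/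
open Finset Polynomial

/-- degenerate difference equation.  `X` plays the role of `q^x`,
`B l X` is `β_{l,q}` evaluated with `q^x = X`, and
`λ^n ([x]_q/λ)_n = ∑_{l=0}^n S₁(n,l) λ^{n-l} [x]_q^l`. -/
theorem degenerate_carlitz_difference_equation
    {K : Type*} [Field K] [CharZero K] (q lam X : K) (hq : q ≠ 1) (n : ℕ) (hn : 1 ≤ n)
    (B : ℕ → K → K)
    (hB : ∀ l (Y : K), q * B l (q * Y) - B l Y =
        (q - 1) * ((1 - Y) / (1 - q)) ^ l + (l : K) * Y * ((1 - Y) / (1 - q)) ^ (l - 1)) :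
    q * (∑ l ∈ range (n + 1), (S1 n l : K) * lam ^ (n - l) * B l (q * X)) -
        (∑ l ∈ range (n + 1), (S1 n l : K) * lam ^ (n - l) * B l X) =
      (q - 1) * (∑ l ∈ range (n + 1), (S1 n l : K) * lam ^ (n - l) * ((1 - X) / (1 - q)) ^ l) +
        ∑ l ∈ Finset.Icc 1 n,
          (S1 n l : K) * lam ^ (n - l) * (l : K) * ((1 - X) / (1 - q)) ^ (l - 1) * X := by
  set w : K := (1 - X) / (1 - q) with hw
  calc q * (∑ l ∈ range (n + 1), (S1 n l : K) * lam ^ (n - l) * B l (q * X)) -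
        (∑ l ∈ range (n + 1), (S1 n l : K) * lam ^ (n - l) * B l X)
      = ∑ l ∈ range (n + 1), (S1 n l : K) * lam ^ (n - l) * (q * B l (q * X) - B l X) := by
        rw [Finset.mul_sum, ← Finset.sum_sub_distrib]
        exact Finset.sum_congr rfl fun l _ => by ring
    _ = ∑ l ∈ range (n + 1), (S1 n l : K) * lam ^ (n - l) *
          ((q - 1) * w ^ l + (l : K) * X * w ^ (l - 1)) := by
        exact Finset.sum_congr rfl fun l _ => by rw [hB]
    _ = (q - 1) * (∑ l ∈ range (n + 1), (S1 n l : K) * lam ^ (n - l) * w ^ l) +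
        ∑ l ∈ range (n + 1), (S1 n l : K) * lam ^ (n - l) * (l : K) * w ^ (l - 1) * X := by
        rw [Finset.mul_sum, ← Finset.sum_add_distrib]
        exact Finset.sum_congr rfl fun l _ => by ring
    _ = _ := by
        congr 1
        refine (Finset.sum_subset (fun l hl => Finset.mem_range.2
          (Nat.lt_succ_of_le (Finset.mem_Icc.1 hl).2)) fun l hl hl' => ?_).symm
        have h0 : l = 0 := by
          rcases Nat.eq_zero_or_pos l with h | h
          · exact h
          · exact absurd (Finset.mem_Icc.2 ⟨h, Nat.lt_succ_iff.1 (Finset.mem_range.1 hl)⟩) hl'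
        simp [h0]
end
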